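/- Change of variables for the nonlinear Young integral along averaged fields: Let T > 0, d ≥ 1, 1 ≤ q < 2. Let w : [0,T] → ℝ^d be continuous, let f : [0,T] × ℝ^d → ℝ^d be bounded and continuous, and let θ, θ̃ : [0,T] → ℝ^d be paths of finite q-variation. For a path v define T^v f(t,x) = ∫_0^t f(r, v_r + x) dr. Assume that A := T^{w+θ} f has finite q-variation in t with respect to the C¹-norm in x, i.e. ‖A‖_{q-var(C¹);[0,T]} < ∞. Then for every t ∈ [0,T], the Riemann sums ∑_{[u,v] ∈ P} (A(v, θ̃_u) − A(u, θ̃_u)) and the Riemann sums ∑_{[u,v] ∈ P} ∫_u^v f(r, w_r + θ_u + θ̃_u) dr, taken over finite partitions P of [0,t], both converge as the mesh tends to 0, and their limits coincide: ∫_0^t T^{w+θ} f(dr, θ̃_r) = ∫_0^t T^w f(dr, θ_r + θ̃_r). -/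

import Mathlib

open scoped ENNReal

/-- A finite partition of the interval `[a,b]`. -/
structure PathPartition (a b : ℝ) where
  n : ℕ
  pts : Fin (n + 1) → ℝ
  mono : Monotone pts
  first : pts 0 = a
  last : pts (Fin.last n) = b

/-- The mesh of a partition. -/
noncomputable def PathPartition.mesh {a b : ℝ} (P : PathPartition a b) : ℝ :=
  ⨆ i : Fin P.n, (P.pts i.succ - P.pts i.castSucc)

/-- The `p`-variation (seminorm) of a path `X` over `[a,b]`, valued in `ℝ≥0∞`. -/
noncomputable def pVar {E : Type*} [NormedAddCommGroup E] (p : ℝ) (X : ℝ → E) (a b : ℝ) :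
    ℝ≥0∞ :=
  ⨆ P : PathPartition a b,
    (∑ i : Fin P.n, (ENNReal.ofReal ‖X (P.pts i.succ) - X (P.pts i.castSucc)‖) ^ p) ^ (1 / p)

/-- The norm `‖g‖_{C¹} = sup_x ‖g x‖ + sup_{x ≠ y} ‖g x - g y‖ / ‖x - y‖`, valued in `ℝ≥0∞`. -/
noncomputable def C1norm {E : Type*} [NormedAddCommGroup E] (g : E → E) : ℝ≥0∞ :=
  (⨆ x : E, ENNReal.ofReal ‖g x‖) +
    ⨆ pr : {pq : E × E // pq.1 ≠ pq.2},
      ENNReal.ofReal (‖g pr.1.1 - g pr.1.2‖ / ‖pr.1.1 - pr.1.2‖)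

/-- The `q`-variation of `t ↦ A (t, ·)` over `[a,b]`, increments measured in the `C¹` norm. -/
noncomputable def qVarC1 {E : Type*} [NormedAddCommGroup E] (q : ℝ) (A : ℝ → E → E)
    (a b : ℝ) : ℝ≥0∞ :=
  ⨆ P : PathPartition a b,
    (∑ i : Fin P.n,
      (C1norm (fun x => A (P.pts i.succ) x - A (P.pts i.castSucc) x)) ^ q) ^ (1 / q)

section Aux
open MeasureTheory Set

variable {d : ℕ}

/-- Alternating sequence of points `a, u 0, r 0, u 1, r 1, ..., u (k-1), r (k-1), b, b, ...`. -/
private def altP (a b : ℝ) (k : ℕ) (u r : Fin k → ℝ) (m : ℕ) : ℝ :=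
  if hm : m = 0 then a
  else if hm2 : 2*k+1 ≤ m then b
  else if h : (m-1) % 2 = 0 then u ⟨(m-1)/2, by omega⟩ else r ⟨(m-1)/2, by omega⟩

private lemma altP_zero (a b : ℝ) (k : ℕ) (u r : Fin k → ℝ) : altP a b k u r 0 = a := by
  simp [altP]

private lemma altP_top (a b : ℝ) (k : ℕ) (u r : Fin k → ℝ) {m : ℕ} (h : 2*k+1 ≤ m) :
    altP a b k u r m = b := by
  rw [altP, dif_neg (by omega), dif_pos h]

private lemma altP_odd (a b : ℝ) (k : ℕ) (u r : Fin k → ℝ) {j : ℕ} (hj : j < k) :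
    altP a b k u r (2*j+1) = u ⟨j, hj⟩ := by
  rw [altP, dif_neg (by omega), dif_neg (by omega), dif_pos (by omega)]
  congr 1
  simp only [Fin.mk.injEq]
  omega

private lemma altP_even (a b : ℝ) (k : ℕ) (u r : Fin k → ℝ) {j : ℕ} (hj : j < k) :
    altP a b k u r (2*j+2) = r ⟨j, hj⟩ := by
  rw [altP, dif_neg (by omega), dif_neg (by omega), dif_neg (by omega)]
  congr 1
  simp only [Fin.mk.injEq]
  omega

private lemma altP_step (a b : ℝ) (k : ℕ) (u r : Fin k → ℝ)
    (hab : a ≤ b) (hau : ∀ j, a ≤ u j) (hur : ∀ j, u j ≤ r j) (hrb : ∀ j, r j ≤ b)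
    (hru : ∀ (j : ℕ) (hj1 : j < k) (hj2 : j+1 < k), r ⟨j, hj1⟩ ≤ u ⟨j+1, hj2⟩) :
    ∀ m, altP a b k u r m ≤ altP a b k u r (m+1) := by
  intro m
  rcases Nat.eq_zero_or_pos m with hm | hm
  · subst hm
    rw [altP_zero]
    rcases Nat.eq_zero_or_pos k with hk | hk
    · rw [altP_top a b k u r (by omega)]; exact hab
    · rw [show (0:ℕ)+1 = 2*0+1 by ring, altP_odd a b k u r hk]; exact hau _
  · by_cases h2 : 2*k+1 ≤ m
    · rw [altP_top a b k u r h2, altP_top a b k u r (by omega)]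
    · obtain ⟨j, hj⟩ : ∃ j, m = 2*j+1 ∨ m = 2*j+2 := ⟨(m-1)/2, by omega⟩
      rcases hj with h | h
      · have hjk : j < k := by omega
        rw [h, altP_odd a b k u r hjk, show 2*j+1+1 = 2*j+2 by ring, altP_even a b k u r hjk]
        exact hur _
      · have hjk : j < k := by omega
        rw [h, altP_even a b k u r hjk]
        by_cases h3 : j+1 < k
        · rw [show 2*j+2+1 = 2*(j+1)+1 by ring, altP_odd a b k u r h3]
          exact hru j hjk h3
        · rw [altP_top a b k u r (by omega)]; exact hrb _

/-- Key counting lemma: `k` ordered pairs with increments of size `≥ δ` force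
`k * δ^q ≤ (pVar q X a b)^q`. -/
private lemma count_pairs (q : ℝ) (hq : 1 ≤ q) (X : ℝ → EuclideanSpace ℝ (Fin d))
    (a b δ : ℝ) (hab : a ≤ b)
    (k : ℕ) (u r : Fin k → ℝ)
    (hau : ∀ j, a ≤ u j) (hur : ∀ j, u j ≤ r j) (hrb : ∀ j, r j ≤ b)
    (hru : ∀ (j : ℕ) (hj1 : j < k) (hj2 : j+1 < k), r ⟨j, hj1⟩ ≤ u ⟨j+1, hj2⟩)
    (hδ : ∀ j, δ ≤ ‖X (r j) - X (u j)‖) :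
    (k : ℝ≥0∞) * (ENNReal.ofReal δ) ^ q ≤ (pVar q X a b) ^ q := by
  have hq0 : (0:ℝ) < q := by linarith
  set P0 : PathPartition a b :=
    { n := 2*k+1
      pts := fun i => altP a b k u r i
      mono := fun i j hij =>
        (monotone_nat_of_le_succ (altP_step a b k u r hab hau hur hrb hru)) hij
      first := altP_zero a b k u r
      last := by simp only [Fin.val_last]; exact altP_top a b k u r le_rfl } with hP0
  have h1 : (∑ i : Fin P0.n,
      (ENNReal.ofReal ‖X (P0.pts i.succ) - X (P0.pts i.castSucc)‖) ^ q) ^ (1/q)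
      ≤ pVar q X a b :=
    le_iSup (fun P : PathPartition a b => (∑ i : Fin P.n,
      (ENNReal.ofReal ‖X (P.pts i.succ) - X (P.pts i.castSucc)‖) ^ q) ^ (1/q)) P0
  have h2 : (∑ i : Fin P0.n,
      (ENNReal.ofReal ‖X (P0.pts i.succ) - X (P0.pts i.castSucc)‖) ^ q)
      ≤ (pVar q X a b) ^ q := by
    have := ENNReal.rpow_le_rpow h1 (le_of_lt hq0)
    rwa [← ENNReal.rpow_mul, one_div_mul_cancel (ne_of_gt hq0), ENNReal.rpow_one] at this
  refine le_trans ?_ h2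
  have hlt : ∀ j : Fin k, 2*(j:ℕ)+1 < P0.n := fun j => by
    show 2*(j:ℕ)+1 < 2*k+1; omega
  set emb : Fin k ↪ Fin P0.n :=
    ⟨fun j => ⟨2*(j:ℕ)+1, hlt j⟩, by
      intro j1 j2 h
      have h2 : 2*(j1:ℕ)+1 = 2*(j2:ℕ)+1 := congrArg Fin.val h
      exact Fin.ext (by omega)⟩ with hemb
  have hterm : ∀ j : Fin k,
      (ENNReal.ofReal δ) ^ q ≤
      (ENNReal.ofReal ‖X (P0.pts (emb j).succ) - X (P0.pts (emb j).castSucc)‖) ^ q := by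
    intro j
    have hsucc : P0.pts (emb j).succ = r j := by
      show altP a b k u r ((emb j).succ : ℕ) = r j
      have hv : ((emb j).succ : ℕ) = 2*(j:ℕ)+2 := rfl
      rw [hv, altP_even a b k u r j.isLt]
    have hcast : P0.pts (emb j).castSucc = u j := by
      show altP a b k u r ((emb j).castSucc : ℕ) = u j
      have hv : ((emb j).castSucc : ℕ) = 2*(j:ℕ)+1 := rfl
      rw [hv, altP_odd a b k u r j.isLt]
    rw [hsucc, hcast]
    exact ENNReal.rpow_le_rpow (ENNReal.ofReal_le_ofReal (hδ j)) (le_of_lt hq0)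
  calc (k : ℝ≥0∞) * (ENNReal.ofReal δ) ^ q
      = ∑ _j : Fin k, (ENNReal.ofReal δ) ^ q := by
        rw [Finset.sum_const, Finset.card_univ, Fintype.card_fin, nsmul_eq_mul]
    _ ≤ ∑ j : Fin k,
        (ENNReal.ofReal ‖X (P0.pts (emb j).succ) - X (P0.pts (emb j).castSucc)‖) ^ q :=
        Finset.sum_le_sum fun j _ => hterm j
    _ = ∑ i ∈ Finset.univ.map emb,
        (ENNReal.ofReal ‖X (P0.pts i.succ) - X (P0.pts i.castSucc)‖) ^ q :=
        (Finset.sum_map Finset.univ emb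
          (fun i => (ENNReal.ofReal ‖X (P0.pts i.succ) - X (P0.pts i.castSucc)‖) ^ q)).symm
    _ ≤ ∑ i : Fin P0.n,
        (ENNReal.ofReal ‖X (P0.pts i.succ) - X (P0.pts i.castSucc)‖) ^ q :=
        Finset.sum_le_sum_of_subset (Finset.subset_univ _)


/-- All partition points lie in `[a, b]`. -/
private lemma PathPartition.pts_mem {a b : ℝ} (P : PathPartition a b) (i : Fin (P.n + 1)) :
    P.pts i ∈ Set.Icc a b := by
  constructor
  · have h := P.mono (Fin.zero_le i); rwa [P.first] at h
  · have h := P.mono (Fin.le_last i); rwa [P.last] at h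

/-- Counting "bad" intervals of a partition. -/
private lemma card_bad_le (q : ℝ) (hq : 1 ≤ q) (T t δ : ℝ) (ψ : ℝ → EuclideanSpace ℝ (Fin d))
    (hψ : pVar q ψ 0 T < ⊤) (ht0 : 0 ≤ t) (htT : t ≤ T) (hδpos : 0 < δ)
    (P : PathPartition 0 t) (pick : Fin P.n → ℝ)
    (hpick : ∀ i, pick i ∈ Set.Icc (P.pts i.castSucc) (P.pts i.succ))
    (B : Finset (Fin P.n)) (hB : ∀ i ∈ B, δ ≤ ‖ψ (pick i) - ψ (P.pts i.castSucc)‖) :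
    (B.card : ℝ) ≤ ((pVar q ψ 0 T) ^ q / (ENNReal.ofReal δ) ^ q).toReal := by
  have hq0 : (0:ℝ) < q := by linarith
  set m := B.card with hm
  set e := B.orderIsoOfFin rfl with he
  have key : ((m : ℕ) : ℝ≥0∞) * (ENNReal.ofReal δ) ^ q ≤ (pVar q ψ 0 T) ^ q := by
    apply count_pairs q hq ψ 0 T δ (le_trans ht0 htT) m
      (fun j => P.pts ((e j : Fin P.n)).castSucc) (fun j => pick (e j))
    · intro j
      exact (P.pts_mem _).1
    · intro j
      exact (hpick _).1
    · intro j
      exact le_trans (le_trans (hpick _).2 (P.pts_mem _).2) htT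
    · intro j hj1 hj2
      have hlt : (e ⟨j, hj1⟩ : Fin P.n) < (e ⟨j+1, hj2⟩ : Fin P.n) := by
        exact e.strictMono (show (⟨j, hj1⟩ : Fin m) < ⟨j+1, hj2⟩ from by
          simp [Fin.lt_def])
      have hle : ((e ⟨j, hj1⟩ : Fin P.n)).succ ≤ ((e ⟨j+1, hj2⟩ : Fin P.n)).castSucc := by
        rw [Fin.le_def]
        simp only [Fin.val_succ, Fin.coe_castSucc]
        exact hlt
      exact le_trans (hpick _).2 (P.mono hle)
    · intro j
      exact hB _ (e j).2
  have hc0 : (ENNReal.ofReal δ) ^ q ≠ 0 := by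
    simp only [ne_eq, ENNReal.rpow_eq_zero_iff, not_or, not_and, not_lt]
    constructor
    · intro h0
      exact absurd h0 (by simp only [ENNReal.ofReal_eq_zero, not_le]; exact hδpos)
    · intro htop
      exact absurd htop (by simp)
  have hcT : (ENNReal.ofReal δ) ^ q ≠ ⊤ :=
    ENNReal.rpow_ne_top_of_nonneg (le_of_lt hq0) ENNReal.ofReal_ne_top
  have hPT : (pVar q ψ 0 T) ^ q ≠ ⊤ :=
    ENNReal.rpow_ne_top_of_nonneg (le_of_lt hq0) hψ.ne
  have hdiv : ((m : ℕ) : ℝ≥0∞) ≤ (pVar q ψ 0 T) ^ q / (ENNReal.ofReal δ) ^ q :=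
    (ENNReal.le_div_iff_mul_le (Or.inl hc0) (Or.inl hcT)).2 key
  have htop : (pVar q ψ 0 T) ^ q / (ENNReal.ofReal δ) ^ q ≠ ⊤ :=
    (ENNReal.div_lt_top hPT hc0).ne
  have h := ENNReal.toReal_mono htop hdiv
  simpa using h

/-- Uniform bound on a finite-variation path. -/
private lemma norm_le_of_pVar (q T : ℝ) (hq : 1 ≤ q) (X : ℝ → EuclideanSpace ℝ (Fin d))
    (hX : pVar q X 0 T < ⊤) (s : ℝ) (hs : s ∈ Set.Icc 0 T) :
    ‖X s‖ ≤ ‖X 0‖ + (pVar q X 0 T).toReal := by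
  have hq0 : (0:ℝ) < q := by linarith
  have hab : (0:ℝ) ≤ T := le_trans hs.1 hs.2
  have key : ((1:ℕ) : ℝ≥0∞) * (ENNReal.ofReal ‖X s - X 0‖) ^ q ≤ (pVar q X 0 T) ^ q :=
    count_pairs q hq X 0 T (‖X s - X 0‖) hab 1 (fun _ => 0) (fun _ => s)
      (fun _ => le_rfl) (fun _ => hs.1) (fun _ => hs.2)
      (fun j hj1 hj2 => absurd hj2 (by omega))
      (fun _ => le_rfl)
  rw [Nat.cast_one, one_mul] at key
  have h2 : ENNReal.ofReal ‖X s - X 0‖ ≤ pVar q X 0 T :=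
    (ENNReal.rpow_le_rpow_iff hq0).1 key
  have h3 : ‖X s - X 0‖ ≤ (pVar q X 0 T).toReal :=
    (ENNReal.ofReal_le_iff_le_toReal hX.ne).1 h2
  calc ‖X s‖ = ‖X 0 + (X s - X 0)‖ := by congr 1; abel
    _ ≤ ‖X 0‖ + ‖X s - X 0‖ := norm_add_le _ _
    _ ≤ _ := by linarith

/-- The zero path has zero variation. -/
private lemma pVar_zero_fun (q a b : ℝ) (hq : 1 ≤ q) :
    pVar q (fun _ : ℝ => (0 : EuclideanSpace ℝ (Fin d))) a b = 0 := by
  refine le_antisymm (iSup_le fun P => le_of_eq ?_) zero_le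
  have h1 : (0:ℝ) < q := by linarith
  have h2 : (0:ℝ) < 1/q := by positivity
  simp [ENNReal.zero_rpow_of_pos, h1, h2]

/-- A path of finite `q`-variation on `[0,T]` is a.e. strongly measurable on `(0,t]`. -/
private lemma aesm_of_pVar (q T t : ℝ) (hq : 1 ≤ q) (X : ℝ → EuclideanSpace ℝ (Fin d))
    (hX : pVar q X 0 T < ⊤) (ht0 : 0 ≤ t) (htT : t ≤ T) :
    MeasureTheory.AEStronglyMeasurable X (MeasureTheory.volume.restrict (Set.Ioc 0 t)) := by
  classical
  have hq0 : (0:ℝ) < q := by linarith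
  set D : ℕ → Set ℝ := fun n => {s | s ∈ Set.Ioc (0:ℝ) T ∧
    ∀ δ > (0:ℝ), ∃ x ∈ Metric.ball s δ ∩ Set.Icc 0 T, ∃ y ∈ Metric.ball s δ ∩ Set.Icc 0 T,
      1/(n+1 : ℝ) ≤ ‖X x - X y‖} with hD
  have hDfin : ∀ n, (D n).Finite := by
    intro n
    by_contra hinf
    have hinf : (D n).Infinite := hinf
    have hcpos : (0:ℝ) < 1/(n+1 : ℝ) := by positivity
    set c : ℝ≥0∞ := (ENNReal.ofReal (1/(n+1:ℝ)))^q with hc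
    have hc0 : c ≠ 0 := by
      rw [hc]
      simp only [ne_eq, ENNReal.rpow_eq_zero_iff, not_or, not_and, not_lt]
      constructor
      · intro h0
        exact absurd h0 (by simp only [ENNReal.ofReal_eq_zero, not_le]; exact hcpos)
      · intro htop
        exact absurd htop (by simp)
    have hcT : c ≠ ⊤ := ENNReal.rpow_ne_top_of_nonneg hq0.le ENNReal.ofReal_ne_top
    have hPT : (pVar q X 0 T) ^ q ≠ ⊤ :=
      ENNReal.rpow_ne_top_of_nonneg (le_of_lt hq0) hX.ne
    have hbT : (pVar q X 0 T) ^ q / c ≠ ⊤ := (ENNReal.div_lt_top hPT hc0).ne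
    obtain ⟨m, hm⟩ := ENNReal.exists_nat_gt (lt_top_iff_ne_top.1 (lt_top_iff_ne_top.2 hbT))
    obtain ⟨F, hFsub, hFcard⟩ := hinf.exists_subset_card_eq m
    set e := F.orderIsoOfFin hFcard with he
    set sp : Fin m → ℝ := fun j => (e j : ℝ) with hsp
    have hmem : ∀ j, sp j ∈ D n := fun j => hFsub (Finset.mem_coe.mpr (e j).2)
    have hmono : StrictMono sp := fun i j hij => Subtype.coe_lt_coe.2 (e.strictMono hij)
    set prevv : Fin m → ℝ := fun j =>
      if h : 0 < (j:ℕ) then sp ⟨(j:ℕ)-1, by omega⟩ else 0 with hprevv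
    set nextv : Fin m → ℝ := fun j =>
      if h : (j:ℕ)+1 < m then sp ⟨(j:ℕ)+1, h⟩ else sp j + 1 with hnextv
    set dl : Fin m → ℝ := fun j => (1/2) * min (sp j - prevv j) (nextv j - sp j) with hdl
    have hprevlt : ∀ j, prevv j < sp j := by
      intro j
      simp only [hprevv]
      by_cases h : 0 < (j:ℕ)
      · rw [dif_pos h]
        exact hmono (by simp [Fin.lt_def]; omega)
      · rw [dif_neg h]
        exact (hmem j).1.1
    have hnextgt : ∀ j, sp j < nextv j := by
      intro j
      simp only [hnextv]
      by_cases h : (j:ℕ)+1 < m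
      · rw [dif_pos h]
        exact hmono (by simp [Fin.lt_def])
      · rw [dif_neg h]
        linarith
    have hdlpos : ∀ j, 0 < dl j := by
      intro j
      simp only [hdl]
      have h1 := hprevlt j
      have h2 := hnextgt j
      simp only [gt_iff_lt]
      have : 0 < min (sp j - prevv j) (nextv j - sp j) := lt_min (by linarith) (by linarith)
      linarith
    choose xx hxx yy hyy hxy using fun j => (hmem j).2 (dl j) (hdlpos j)
    have hxball : ∀ j, |xx j - sp j| < dl j := by
      intro j
      have := (hxx j).1
      rwa [Metric.mem_ball, Real.dist_eq] at this
    have hyball : ∀ j, |yy j - sp j| < dl j := by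
      intro j
      have := (hyy j).1
      rwa [Metric.mem_ball, Real.dist_eq] at this
    set uu : Fin m → ℝ := fun j => min (xx j) (yy j) with huu
    set rr : Fin m → ℝ := fun j => max (xx j) (yy j) with hrr
    have key : ((m : ℕ) : ℝ≥0∞) * c ≤ (pVar q X 0 T) ^ q := by
      rw [hc]
      apply count_pairs q hq X 0 T (1/(n+1:ℝ)) (le_trans ht0 htT) m uu rr
      · intro j
        exact le_min (hxx j).2.1 (hyy j).2.1
      · intro j
        exact min_le_max
      · intro j
        exact max_le (hxx j).2.2 (hyy j).2.2
      · intro j hj1 hj2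
        have hnx : nextv ⟨j, hj1⟩ = sp ⟨j+1, hj2⟩ := by
          simp only [hnextv]
          rw [dif_pos (show ((⟨j, hj1⟩ : Fin m) : ℕ) + 1 < m from hj2)]
        have hpv : prevv ⟨j+1, hj2⟩ = sp ⟨j, hj1⟩ := by
          simp only [hprevv]
          rw [dif_pos (show 0 < ((⟨j+1, hj2⟩ : Fin m) : ℕ) from by simp)]
          congr 1
        have hd1 : dl ⟨j, hj1⟩ ≤ (1/2) * (sp ⟨j+1, hj2⟩ - sp ⟨j, hj1⟩) := by
          have hmle : min (sp ⟨j, hj1⟩ - prevv ⟨j, hj1⟩) (nextv ⟨j, hj1⟩ - sp ⟨j, hj1⟩)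
              ≤ sp ⟨j+1, hj2⟩ - sp ⟨j, hj1⟩ :=
            le_trans (min_le_right _ _) (le_of_eq (by rw [hnx]))
          simp only [hdl]
          linarith
        have hd2 : dl ⟨j+1, hj2⟩ ≤ (1/2) * (sp ⟨j+1, hj2⟩ - sp ⟨j, hj1⟩) := by
          have hmle : min (sp ⟨j+1, hj2⟩ - prevv ⟨j+1, hj2⟩)
                (nextv ⟨j+1, hj2⟩ - sp ⟨j+1, hj2⟩)
              ≤ sp ⟨j+1, hj2⟩ - sp ⟨j, hj1⟩ :=
            le_trans (min_le_left _ _) (le_of_eq (by rw [hpv]))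
          simp only [hdl]
          linarith
        have hr : rr ⟨j, hj1⟩ ≤ sp ⟨j, hj1⟩ + dl ⟨j, hj1⟩ := by
          simp only [hrr]
          have h1 := abs_lt.1 (hxball ⟨j, hj1⟩)
          have h2 := abs_lt.1 (hyball ⟨j, hj1⟩)
          apply max_le <;> linarith
        have hu : sp ⟨j+1, hj2⟩ - dl ⟨j+1, hj2⟩ ≤ uu ⟨j+1, hj2⟩ := by
          simp only [huu]
          have h1 := abs_lt.1 (hxball ⟨j+1, hj2⟩)
          have h2 := abs_lt.1 (hyball ⟨j+1, hj2⟩)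
          apply le_min <;> linarith
        linarith
      · intro j
        rcases le_total (xx j) (yy j) with h | h
        · rw [huu, hrr]
          simp only [min_eq_left h, max_eq_right h]
          rw [norm_sub_rev]
          exact hxy j
        · rw [huu, hrr]
          simp only [min_eq_right h, max_eq_left h]
          exact hxy j
    have hmle : ((m : ℕ) : ℝ≥0∞) ≤ (pVar q X 0 T) ^ q / c :=
      (ENNReal.le_div_iff_mul_le (Or.inl hc0) (Or.inl hcT)).2 key
    exact absurd hmle (not_le.2 hm)
  set Dall : Set ℝ := ⋃ n, D n with hDall
  have hDc : Dall.Countable := Set.countable_iUnion fun n => (hDfin n).countable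
  have hDnull : MeasureTheory.volume Dall = 0 := hDc.measure_zero _
  set S : Set ℝ := Set.Ioc 0 t \ Dall with hS
  have hSm : MeasurableSet S := measurableSet_Ioc.diff hDc.measurableSet
  have hcont : ContinuousOn X S := by
    intro s hs
    rw [Metric.continuousWithinAt_iff]
    intro ε hε
    obtain ⟨n, hn⟩ := exists_nat_one_div_lt hε
    have hsD : s ∉ D n := fun h => hs.2 (Set.mem_iUnion.2 ⟨n, h⟩)
    have hsIoc : s ∈ Set.Ioc (0:ℝ) T := ⟨hs.1.1, le_trans hs.1.2 htT⟩
    have hsD' : ¬ (∀ δ > (0:ℝ), ∃ x ∈ Metric.ball s δ ∩ Set.Icc 0 T,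
        ∃ y ∈ Metric.ball s δ ∩ Set.Icc 0 T, 1/(n+1 : ℝ) ≤ ‖X x - X y‖) :=
      fun h => hsD ⟨hsIoc, h⟩
    push_neg at hsD'
    obtain ⟨δ₀, hδ₀, hgood⟩ := hsD'
    refine ⟨δ₀, hδ₀, ?_⟩
    intro x hxS hxdist
    have hx1 : x ∈ Metric.ball s δ₀ ∩ Set.Icc 0 T :=
      ⟨Metric.mem_ball.2 hxdist, ⟨hxS.1.1.le, le_trans hxS.1.2 htT⟩⟩
    have hs1 : s ∈ Metric.ball s δ₀ ∩ Set.Icc 0 T :=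
      ⟨Metric.mem_ball_self hδ₀, ⟨hsIoc.1.le, hsIoc.2⟩⟩
    have hlt := hgood x hx1 s hs1
    calc dist (X x) (X s) = ‖X x - X s‖ := dist_eq_norm _ _
      _ < 1/(n+1 : ℝ) := hlt
      _ < ε := hn
  have ham : AEMeasurable X (MeasureTheory.volume.restrict S) := hcont.aemeasurable hSm
  have hres : MeasureTheory.volume.restrict S = MeasureTheory.volume.restrict (Set.Ioc 0 t) := by
    apply MeasureTheory.Measure.restrict_congr_set
    exact MeasureTheory.diff_ae_eq_self.2
      (MeasureTheory.measure_mono_null Set.inter_subset_right hDnull)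
  rw [hres] at ham
  exact ham.aestronglyMeasurable

private lemma gap_le_mesh {a b : ℝ} (P : PathPartition a b) (i : Fin P.n) :
    P.pts i.succ - P.pts i.castSucc ≤ P.mesh := by
  unfold PathPartition.mesh
  exact le_ciSup (f := fun i : Fin P.n => P.pts i.succ - P.pts i.castSucc)
    (Set.Finite.bddAbove (Set.finite_range _)) i

private lemma gap_nonneg {a b : ℝ} (P : PathPartition a b) (i : Fin P.n) :
    0 ≤ P.pts i.succ - P.pts i.castSucc :=
  sub_nonneg.2 (P.mono (Fin.castSucc_le_succ i))

/-- auxiliary reindexing of the partition points by `ℕ`. -/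
private def PathPartition.nth {a b : ℝ} (P : PathPartition a b) (m : ℕ) : ℝ :=
  P.pts ⟨min m P.n, Nat.lt_succ_of_le (min_le_right _ _)⟩

private lemma PathPartition.nth_zero {a b : ℝ} (P : PathPartition a b) : P.nth 0 = a := by
  rw [PathPartition.nth]
  have : (⟨min 0 P.n, Nat.lt_succ_of_le (min_le_right _ _)⟩ : Fin (P.n+1)) = 0 := by
    apply Fin.ext; simp
  rw [this, P.first]

private lemma PathPartition.nth_last {a b : ℝ} (P : PathPartition a b) : P.nth P.n = b := by
  rw [PathPartition.nth]
  have : (⟨min P.n P.n, Nat.lt_succ_of_le (min_le_right _ _)⟩ : Fin (P.n+1)) = Fin.last P.n := by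
    apply Fin.ext; simp [Fin.val_last]
  rw [this, P.last]

private lemma PathPartition.nth_castSucc {a b : ℝ} (P : PathPartition a b) (i : Fin P.n) :
    P.nth i = P.pts i.castSucc := by
  rw [PathPartition.nth]
  congr 1
  apply Fin.ext
  simp [Nat.min_eq_left (le_of_lt i.isLt)]

private lemma PathPartition.nth_succ {a b : ℝ} (P : PathPartition a b) (i : Fin P.n) :
    P.nth ((i:ℕ)+1) = P.pts i.succ := by
  rw [PathPartition.nth]
  congr 1
  apply Fin.ext
  simp [Nat.min_eq_left i.isLt]

private lemma PathPartition.nth_mono {a b : ℝ} (P : PathPartition a b) : Monotone P.nth := by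
  intro m1 m2 h
  exact P.mono (by simp only [Fin.mk_le_mk]; exact min_le_min h le_rfl)

private lemma PathPartition.nth_mem {a b : ℝ} (P : PathPartition a b) (m : ℕ) :
    P.nth m ∈ Set.Icc a b := P.pts_mem _

private lemma sum_gaps {a b : ℝ} (P : PathPartition a b) :
    ∑ i : Fin P.n, (P.pts i.succ - P.pts i.castSucc) = b - a := by
  have h : ∀ i : Fin P.n, P.pts i.succ - P.pts i.castSucc = P.nth ((i:ℕ)+1) - P.nth (i:ℕ) := by
    intro i
    rw [P.nth_succ, P.nth_castSucc]
  calc ∑ i : Fin P.n, (P.pts i.succ - P.pts i.castSucc)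
      = ∑ i : Fin P.n, (P.nth ((i:ℕ)+1) - P.nth (i:ℕ)) := Finset.sum_congr rfl fun i _ => h i
    _ = ∑ m ∈ Finset.range P.n, (P.nth (m+1) - P.nth m) :=
        Fin.sum_univ_eq_sum_range (fun m => P.nth (m+1) - P.nth m) P.n
    _ = P.nth P.n - P.nth 0 := Finset.sum_range_sub P.nth P.n
    _ = b - a := by rw [P.nth_zero, P.nth_last]

/-- A bounded function whose composition path is a.e. strongly measurable is integrable. -/
private lemma integrableOn_comp (t M : ℝ)
    (f : ℝ → EuclideanSpace ℝ (Fin d) → EuclideanSpace ℝ (Fin d))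
    (hfb : ∀ r x, ‖f r x‖ ≤ M)
    (hfc : Continuous (fun p : ℝ × EuclideanSpace ℝ (Fin d) => f p.1 p.2))
    (X : ℝ → EuclideanSpace ℝ (Fin d))
    (hX : MeasureTheory.AEStronglyMeasurable X (MeasureTheory.volume.restrict (Set.Ioc 0 t))) :
    MeasureTheory.IntegrableOn (fun r => f r (X r)) (Set.Ioc 0 t) := by
  have hpair : MeasureTheory.AEStronglyMeasurable (fun r => (r, X r))
      (MeasureTheory.volume.restrict (Set.Ioc 0 t)) :=
    (aestronglyMeasurable_id.prodMk hX)
  have hc : MeasureTheory.AEStronglyMeasurable (fun r => f r (X r))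
      (MeasureTheory.volume.restrict (Set.Ioc 0 t)) :=
    hfc.comp_aestronglyMeasurable hpair
  refine MeasureTheory.Integrable.mono'
    (MeasureTheory.integrableOn_const measure_Ioc_lt_top.ne) hc
    (Filter.Eventually.of_forall fun r => hfb r _)

private lemma intervalIntegrable_comp (t M : ℝ)
    (f : ℝ → EuclideanSpace ℝ (Fin d) → EuclideanSpace ℝ (Fin d))
    (hfb : ∀ r x, ‖f r x‖ ≤ M)
    (hfc : Continuous (fun p : ℝ × EuclideanSpace ℝ (Fin d) => f p.1 p.2))
    (X : ℝ → EuclideanSpace ℝ (Fin d))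
    (hX : MeasureTheory.AEStronglyMeasurable X (MeasureTheory.volume.restrict (Set.Ioc 0 t)))
    (u v : ℝ) (hu : 0 ≤ u) (huv : u ≤ v) (hv : v ≤ t) :
    IntervalIntegrable (fun r => f r (X r)) MeasureTheory.volume u v := by
  rw [intervalIntegrable_iff_integrableOn_Ioc_of_le huv]
  exact (integrableOn_comp t M f hfb hfc X hX).mono_set (Set.Ioc_subset_Ioc hu hv)

/-- Splitting an interval integral along a partition. -/
private lemma integral_split {t : ℝ} (P : PathPartition 0 t)
    (F : ℝ → EuclideanSpace ℝ (Fin d))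
    (hF : ∀ u v : ℝ, 0 ≤ u → u ≤ v → v ≤ t →
      IntervalIntegrable F MeasureTheory.volume u v) :
    ∫ r in (0:ℝ)..t, F r
      = ∑ i : Fin P.n, ∫ r in (P.pts i.castSucc)..(P.pts i.succ), F r := by
  have hint : ∀ k < P.n, IntervalIntegrable F MeasureTheory.volume (P.nth k) (P.nth (k+1)) := by
    intro k _
    exact hF _ _ (P.nth_mem k).1 (P.nth_mono (Nat.le_succ k)) (P.nth_mem (k+1)).2
  have h := intervalIntegral.sum_integral_adjacent_intervals (a := P.nth) (n := P.n)
    (f := F) (μ := MeasureTheory.volume) hint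
  rw [P.nth_zero, P.nth_last] at h
  rw [← h]
  rw [← Fin.sum_univ_eq_sum_range (fun k => ∫ r in (P.nth k)..(P.nth (k+1)), F r) P.n]
  refine Finset.sum_congr rfl fun i _ => ?_
  rw [P.nth_succ, P.nth_castSucc]

set_option maxHeartbeats 1000000 in
/-- Main generic convergence lemma: Riemann-type sums with the paths `ψ₁, ψ₂`
frozen at the left endpoints converge to the integral with the running paths. -/
private lemma gen_conv (T q : ℝ) (hq1 : 1 ≤ q)
    (t : ℝ) (ht0 : 0 ≤ t) (htT : t ≤ T)
    (f : ℝ → EuclideanSpace ℝ (Fin d) → EuclideanSpace ℝ (Fin d)) (M : ℝ)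
    (hfb : ∀ r x, ‖f r x‖ ≤ M)
    (hfc : Continuous (fun p : ℝ × EuclideanSpace ℝ (Fin d) => f p.1 p.2))
    (w : ℝ → EuclideanSpace ℝ (Fin d)) (hw : ContinuousOn w (Set.Icc 0 T))
    (φ ψ₁ ψ₂ : ℝ → EuclideanSpace ℝ (Fin d))
    (hφm : MeasureTheory.AEStronglyMeasurable φ (MeasureTheory.volume.restrict (Set.Ioc 0 t)))
    (hψ₁m : MeasureTheory.AEStronglyMeasurable ψ₁ (MeasureTheory.volume.restrict (Set.Ioc 0 t)))
    (hψ₂m : MeasureTheory.AEStronglyMeasurable ψ₂ (MeasureTheory.volume.restrict (Set.Ioc 0 t)))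
    (Cφ C₁ C₂ : ℝ)
    (hφb : ∀ s ∈ Set.Icc (0:ℝ) T, ‖φ s‖ ≤ Cφ)
    (hψ₁b : ∀ s ∈ Set.Icc (0:ℝ) T, ‖ψ₁ s‖ ≤ C₁)
    (hψ₂b : ∀ s ∈ Set.Icc (0:ℝ) T, ‖ψ₂ s‖ ≤ C₂)
    (hψ₁v : pVar q ψ₁ 0 T < ⊤) (hψ₂v : pVar q ψ₂ 0 T < ⊤)
    (ε : ℝ) (hε : 0 < ε) :
    ∃ δ > (0:ℝ), ∀ P : PathPartition 0 t, P.mesh < δ →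
      ‖(∑ i : Fin P.n, ∫ r in (P.pts i.castSucc)..(P.pts i.succ),
          f r (w r + φ r + (ψ₁ (P.pts i.castSucc) + ψ₂ (P.pts i.castSucc))))
        - ∫ r in (0:ℝ)..t, f r (w r + φ r + (ψ₁ r + ψ₂ r))‖ < ε := by
  classical
  have hT0 : (0:ℝ) ≤ T := le_trans ht0 htT
  have hM0 : (0:ℝ) ≤ M := le_trans (norm_nonneg _) (hfb 0 0)
  obtain ⟨Cw, hCw⟩ := isCompact_Icc.exists_bound_of_continuousOn hw
  set R : ℝ := Cw + Cφ + C₁ + C₂ with hR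
  set K : Set (ℝ × EuclideanSpace ℝ (Fin d)) :=
    Set.Icc (0:ℝ) T ×ˢ Metric.closedBall 0 R with hK
  have hKc : IsCompact K := isCompact_Icc.prod (isCompact_closedBall _ _)
  have hfu : UniformContinuousOn (fun p : ℝ × EuclideanSpace ℝ (Fin d) => f p.1 p.2) K :=
    hKc.uniformContinuousOn_of_continuous hfc.continuousOn
  rw [Metric.uniformContinuousOn_iff] at hfu
  set ε' : ℝ := ε / (2*(T+1)) with hε'
  have hT1 : (0:ℝ) < T + 1 := by linarith
  have hε'pos : 0 < ε' := by rw [hε']; positivity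
  obtain ⟨δf, hδfpos, hfu'⟩ := hfu ε' hε'pos
  set N₁ : ℝ := ((pVar q ψ₁ 0 T)^q / (ENNReal.ofReal (δf/2))^q).toReal with hN₁
  set N₂ : ℝ := ((pVar q ψ₂ 0 T)^q / (ENNReal.ofReal (δf/2))^q).toReal with hN₂
  have hN₁0 : 0 ≤ N₁ := ENNReal.toReal_nonneg
  have hN₂0 : 0 ≤ N₂ := ENNReal.toReal_nonneg
  set δ : ℝ := ε / (2*(N₁+N₂+1)*(2*M+1)) with hδdef
  have hδpos : 0 < δ := by rw [hδdef]; positivity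
  refine ⟨δ, hδpos, ?_⟩
  intro P hmesh
  -- notation
  have hPuv : ∀ i : Fin P.n, P.pts i.castSucc ≤ P.pts i.succ :=
    fun i => P.mono (Fin.castSucc_le_succ i)
  have hPmem : ∀ i : Fin (P.n+1), P.pts i ∈ Set.Icc (0:ℝ) t := fun i => P.pts_mem i
  -- integrability
  have htint : MeasureTheory.AEStronglyMeasurable (fun r => w r + φ r + (ψ₁ r + ψ₂ r))
      (MeasureTheory.volume.restrict (Set.Ioc 0 t)) := by
    have hwm : MeasureTheory.AEStronglyMeasurable w
        (MeasureTheory.volume.restrict (Set.Ioc 0 t)) :=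
      (hw.mono (fun x hx => ⟨hx.1.le, hx.2.trans htT⟩)).aestronglyMeasurable measurableSet_Ioc
    exact (hwm.add hφm).add (hψ₁m.add hψ₂m)
  have hpint : ∀ c : EuclideanSpace ℝ (Fin d),
      MeasureTheory.AEStronglyMeasurable (fun r => w r + φ r + c)
      (MeasureTheory.volume.restrict (Set.Ioc 0 t)) := by
    intro c
    have hwm : MeasureTheory.AEStronglyMeasurable w
        (MeasureTheory.volume.restrict (Set.Ioc 0 t)) :=
      (hw.mono (fun x hx => ⟨hx.1.le, hx.2.trans htT⟩)).aestronglyMeasurable measurableSet_Ioc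
    exact (hwm.add hφm).add aestronglyMeasurable_const
  have hIsplit : ∫ r in (0:ℝ)..t, f r (w r + φ r + (ψ₁ r + ψ₂ r))
      = ∑ i : Fin P.n, ∫ r in (P.pts i.castSucc)..(P.pts i.succ),
          f r (w r + φ r + (ψ₁ r + ψ₂ r)) :=
    integral_split P _ (fun u v hu huv hv =>
      intervalIntegrable_comp t M f hfb hfc _ htint u v hu huv hv)
  -- the "good interval" predicate
  set Pu : Fin P.n → ℝ := fun i => P.pts i.castSucc with hPu
  set Pv : Fin P.n → ℝ := fun i => P.pts i.succ with hPv
  set good : Fin P.n → Prop := fun i => ∀ r ∈ Set.Icc (Pu i) (Pv i),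
      ‖ψ₁ r - ψ₁ (Pu i)‖ < δf/2 ∧ ‖ψ₂ r - ψ₂ (Pu i)‖ < δf/2 with hgood
  -- pointwise estimates on each interval
  have hperpiece : ∀ i : Fin P.n,
      ‖(∫ r in (Pu i)..(Pv i), f r (w r + φ r + (ψ₁ (Pu i) + ψ₂ (Pu i))))
        - ∫ r in (Pu i)..(Pv i), f r (w r + φ r + (ψ₁ r + ψ₂ r))‖
      ≤ (if good i then ε' else 2*M) * (Pv i - Pu i) := by
    intro i
    have hii1 : IntervalIntegrable (fun r => f r (w r + φ r + (ψ₁ (Pu i) + ψ₂ (Pu i))))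
        MeasureTheory.volume (Pu i) (Pv i) :=
      intervalIntegrable_comp t M f hfb hfc _ (hpint _) _ _ (hPmem _).1 (hPuv i) (hPmem _).2
    have hii2 : IntervalIntegrable (fun r => f r (w r + φ r + (ψ₁ r + ψ₂ r)))
        MeasureTheory.volume (Pu i) (Pv i) :=
      intervalIntegrable_comp t M f hfb hfc _ htint _ _ (hPmem _).1 (hPuv i) (hPmem _).2
    rw [← intervalIntegral.integral_sub hii1 hii2]
    have habs : |Pv i - Pu i| = Pv i - Pu i := abs_of_nonneg (by linarith [hPuv i])
    have hrIcc : ∀ r ∈ Set.uIoc (Pu i) (Pv i), r ∈ Set.Icc (Pu i) (Pv i) := by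
      intro r hr
      rw [Set.uIoc_of_le (hPuv i)] at hr
      exact ⟨hr.1.le, hr.2⟩
    have hrT : ∀ r ∈ Set.Icc (Pu i) (Pv i), r ∈ Set.Icc (0:ℝ) T := by
      intro r hr
      constructor
      · linarith [(hPmem i.castSucc).1, hr.1]
      · linarith [(hPmem i.succ).2, hr.2, htT]
    by_cases hg : good i
    · rw [if_pos hg]
      rw [← habs]
      apply intervalIntegral.norm_integral_le_of_norm_le_const
      intro r hr
      have hrIcc' := hrIcc r hr
      have hrT' := hrT r hrIcc'
      have hPuT : Pu i ∈ Set.Icc (0:ℝ) T := hrT _ (Set.left_mem_Icc.2 (hPuv i))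
      set A : EuclideanSpace ℝ (Fin d) := w r + φ r + (ψ₁ (Pu i) + ψ₂ (Pu i)) with hA
      set B : EuclideanSpace ℝ (Fin d) := w r + φ r + (ψ₁ r + ψ₂ r) with hB
      have hnormA : ‖A‖ ≤ R := by
        rw [hA, hR]
        calc ‖w r + φ r + (ψ₁ (Pu i) + ψ₂ (Pu i))‖
            ≤ ‖w r + φ r‖ + ‖ψ₁ (Pu i) + ψ₂ (Pu i)‖ := norm_add_le _ _
          _ ≤ (‖w r‖ + ‖φ r‖) + (‖ψ₁ (Pu i)‖ + ‖ψ₂ (Pu i)‖) := by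
              gcongr <;> exact norm_add_le _ _
          _ ≤ (Cw + Cφ) + (C₁ + C₂) := by
              gcongr
              · exact hCw r hrT'
              · exact hφb r hrT'
              · exact hψ₁b _ hPuT
              · exact hψ₂b _ hPuT
          _ = Cw + Cφ + C₁ + C₂ := by ring
      have hnormB : ‖B‖ ≤ R := by
        rw [hB, hR]
        calc ‖w r + φ r + (ψ₁ r + ψ₂ r)‖
            ≤ ‖w r + φ r‖ + ‖ψ₁ r + ψ₂ r‖ := norm_add_le _ _
          _ ≤ (‖w r‖ + ‖φ r‖) + (‖ψ₁ r‖ + ‖ψ₂ r‖) := by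
              gcongr <;> exact norm_add_le _ _
          _ ≤ (Cw + Cφ) + (C₁ + C₂) := by
              gcongr
              · exact hCw r hrT'
              · exact hφb r hrT'
              · exact hψ₁b _ hrT'
              · exact hψ₂b _ hrT'
          _ = Cw + Cφ + C₁ + C₂ := by ring
      have hmemA : ((r, A) : ℝ × EuclideanSpace ℝ (Fin d)) ∈ K :=
        ⟨hrT', Metric.mem_closedBall.2 (by rwa [dist_zero_right])⟩
      have hmemB : ((r, B) : ℝ × EuclideanSpace ℝ (Fin d)) ∈ K :=
        ⟨hrT', Metric.mem_closedBall.2 (by rwa [dist_zero_right])⟩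
      have hAB : A - B = (ψ₁ (Pu i) - ψ₁ r) + (ψ₂ (Pu i) - ψ₂ r) := by
        rw [hA, hB]; abel
      have hgr := hg r hrIcc'
      have hdistAB : dist A B < δf := by
        rw [dist_eq_norm, hAB]
        calc ‖(ψ₁ (Pu i) - ψ₁ r) + (ψ₂ (Pu i) - ψ₂ r)‖
            ≤ ‖ψ₁ (Pu i) - ψ₁ r‖ + ‖ψ₂ (Pu i) - ψ₂ r‖ := norm_add_le _ _
          _ < δf/2 + δf/2 := by
              rw [norm_sub_rev, norm_sub_rev (ψ₂ (Pu i))]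
              exact add_lt_add hgr.1 hgr.2
          _ = δf := by ring
      have hdist : dist ((r, A) : ℝ × EuclideanSpace ℝ (Fin d)) (r, B) < δf := by
        rw [Prod.dist_eq]
        simp only [dist_self]
        rw [max_eq_right dist_nonneg]
        exact hdistAB
      have := hfu' (r, A) hmemA (r, B) hmemB hdist
      rw [dist_eq_norm] at this
      exact le_of_lt this
    · rw [if_neg hg]
      rw [← habs]
      apply intervalIntegral.norm_integral_le_of_norm_le_const
      intro r _
      calc ‖f r (w r + φ r + (ψ₁ (Pu i) + ψ₂ (Pu i))) - f r (w r + φ r + (ψ₁ r + ψ₂ r))‖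
          ≤ ‖f r (w r + φ r + (ψ₁ (Pu i) + ψ₂ (Pu i)))‖ + ‖f r (w r + φ r + (ψ₁ r + ψ₂ r))‖ :=
            norm_sub_le _ _
        _ ≤ M + M := add_le_add (hfb _ _) (hfb _ _)
        _ = 2*M := by ring
  -- counting bad intervals
  set Bad : Finset (Fin P.n) := Finset.univ.filter (fun i => ¬ good i) with hBad
  have hcardBad : (Bad.card : ℝ) ≤ N₁ + N₂ := by
    set Bad₁ : Finset (Fin P.n) := Finset.univ.filter
      (fun i => ∃ r ∈ Set.Icc (Pu i) (Pv i), δf/2 ≤ ‖ψ₁ r - ψ₁ (Pu i)‖) with hBad₁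
    set Bad₂ : Finset (Fin P.n) := Finset.univ.filter
      (fun i => ∃ r ∈ Set.Icc (Pu i) (Pv i), δf/2 ≤ ‖ψ₂ r - ψ₂ (Pu i)‖) with hBad₂
    have hsub : Bad ⊆ Bad₁ ∪ Bad₂ := by
      intro i hi
      rw [hBad, Finset.mem_filter] at hi
      have hni := hi.2
      simp only [hgood] at hni
      push_neg at hni
      obtain ⟨r, hr, hror⟩ := hni
      rw [Finset.mem_union, hBad₁, hBad₂, Finset.mem_filter, Finset.mem_filter]
      by_cases h1 : δf/2 ≤ ‖ψ₁ r - ψ₁ (Pu i)‖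
      · exact Or.inl ⟨Finset.mem_univ _, r, hr, h1⟩
      · refine Or.inr ⟨Finset.mem_univ _, r, hr, ?_⟩
        push_neg at h1
        exact hror h1
    have hone : ∀ (ψ : ℝ → EuclideanSpace ℝ (Fin d)), pVar q ψ 0 T < ⊤ →
        ∀ (B : Finset (Fin P.n)), (∀ i ∈ B, ∃ r ∈ Set.Icc (Pu i) (Pv i),
          δf/2 ≤ ‖ψ r - ψ (Pu i)‖) →
        (B.card : ℝ) ≤ ((pVar q ψ 0 T)^q / (ENNReal.ofReal (δf/2))^q).toReal := by
      intro ψ hψ B hB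
      set pick : Fin P.n → ℝ := fun i =>
        if h : ∃ r ∈ Set.Icc (Pu i) (Pv i), δf/2 ≤ ‖ψ r - ψ (Pu i)‖
        then h.choose else Pu i with hpick
      apply card_bad_le q hq1 T t (δf/2) ψ hψ ht0 htT (by linarith) P pick
      · intro i
        simp only [hpick]
        by_cases h : ∃ r ∈ Set.Icc (Pu i) (Pv i), δf/2 ≤ ‖ψ r - ψ (Pu i)‖
        · rw [dif_pos h]
          exact h.choose_spec.1
        · rw [dif_neg h]
          exact Set.left_mem_Icc.2 (hPuv i)
      · intro i hi
        have h := hB i hi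
        simp only [hpick]
        rw [dif_pos h]
        exact h.choose_spec.2
    have hc1 : ((Bad₁).card : ℝ) ≤ N₁ := by
      rw [hN₁]
      apply hone ψ₁ hψ₁v
      intro i hi
      rw [hBad₁, Finset.mem_filter] at hi
      exact hi.2
    have hc2 : ((Bad₂).card : ℝ) ≤ N₂ := by
      rw [hN₂]
      apply hone ψ₂ hψ₂v
      intro i hi
      rw [hBad₂, Finset.mem_filter] at hi
      exact hi.2
    calc (Bad.card : ℝ) ≤ ((Bad₁ ∪ Bad₂).card : ℝ) := by
          exact_mod_cast Finset.card_le_card hsub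
      _ ≤ (Bad₁.card : ℝ) + (Bad₂.card : ℝ) := by
          exact_mod_cast Finset.card_union_le _ _
      _ ≤ N₁ + N₂ := add_le_add hc1 hc2
  -- assembling
  rw [hIsplit, ← Finset.sum_sub_distrib]
  calc ‖∑ i : Fin P.n, ((∫ r in (Pu i)..(Pv i), f r (w r + φ r + (ψ₁ (Pu i) + ψ₂ (Pu i))))
        - ∫ r in (Pu i)..(Pv i), f r (w r + φ r + (ψ₁ r + ψ₂ r)))‖
      ≤ ∑ i : Fin P.n, ‖(∫ r in (Pu i)..(Pv i), f r (w r + φ r + (ψ₁ (Pu i) + ψ₂ (Pu i))))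
        - ∫ r in (Pu i)..(Pv i), f r (w r + φ r + (ψ₁ r + ψ₂ r))‖ := norm_sum_le _ _
    _ ≤ ∑ i : Fin P.n, (if good i then ε' else 2*M) * (Pv i - Pu i) :=
        Finset.sum_le_sum fun i _ => hperpiece i
    _ < ε := ?_
  -- final numeric estimate
  have hsplit2 : ∑ i : Fin P.n, (if good i then ε' else 2*M) * (Pv i - Pu i)
      = (∑ i ∈ Finset.univ.filter (fun i => good i), ε' * (Pv i - Pu i))
        + ∑ i ∈ Bad, (2*M) * (Pv i - Pu i) := by
    rw [hBad, ← Finset.sum_filter_add_sum_filter_not Finset.univ good]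
    congr 1
    · apply Finset.sum_congr rfl
      intro i hi
      rw [Finset.mem_filter] at hi
      rw [if_pos hi.2]
    · apply Finset.sum_congr rfl
      intro i hi
      rw [Finset.mem_filter] at hi
      rw [if_neg hi.2]
  rw [hsplit2]
  have hgoodsum : (∑ i ∈ Finset.univ.filter (fun i => good i), ε' * (Pv i - Pu i)) ≤ ε' * t := by
    rw [← Finset.mul_sum]
    have h1 : (∑ i ∈ Finset.univ.filter (fun i => good i), (Pv i - Pu i))
        ≤ ∑ i : Fin P.n, (Pv i - Pu i) :=
      Finset.sum_le_sum_of_subset_of_nonneg (Finset.filter_subset _ _)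
        (fun i _ _ => gap_nonneg P i)
    have h2 : ∑ i : Fin P.n, (Pv i - Pu i) = t - 0 := sum_gaps P
    have h3 : (∑ i ∈ Finset.univ.filter (fun i => good i), (Pv i - Pu i)) ≤ t := by
      rw [h2] at h1; linarith
    exact mul_le_mul_of_nonneg_left h3 hε'pos.le
  have hbadsum : (∑ i ∈ Bad, (2*M) * (Pv i - Pu i)) ≤ (Bad.card : ℝ) * ((2*M) * δ) := by
    have h := Finset.sum_le_card_nsmul Bad (fun i => (2*M) * (Pv i - Pu i)) ((2*M) * δ) ?_
    · rwa [nsmul_eq_mul] at h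
    · intro i _
      have hle : Pv i - Pu i ≤ δ := le_of_lt (lt_of_le_of_lt (gap_le_mesh P i) hmesh)
      exact mul_le_mul_of_nonneg_left hle (by linarith)
  have hgoodlt : ε' * t < ε / 2 := by
    have h1 : ε' * t ≤ ε' * T := mul_le_mul_of_nonneg_left htT hε'pos.le
    have h2 : ε' * T < ε' * (T+1) := by
      apply mul_lt_mul_of_pos_left _ hε'pos
      linarith
    have h3 : ε' * (T+1) = ε / 2 := by
      rw [hε']
      field_simp
    linarith
  have hbadlt : (Bad.card : ℝ) * ((2*M) * δ) ≤ ε / 2 := by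
    have h1 : (Bad.card : ℝ) * ((2*M) * δ) ≤ (N₁+N₂+1) * ((2*M+1) * δ) := by
      apply mul_le_mul
      · linarith
      · apply mul_le_mul_of_nonneg_right _ hδpos.le
        linarith
      · positivity
      · linarith
    have h2 : (N₁+N₂+1) * ((2*M+1) * δ) = ε / 2 := by
      rw [hδdef]
      field_simp
    linarith
  linarith

end Aux

/-- Change of variables for the nonlinear Young integral along averaged fields:
with `A = T^{w+θ} f`, i.e. `A t x = ∫_0^t f(r, w_r + θ_r + x) dr`, the Riemann sums of
`∫ T^{w+θ} f (dr, θ̃_r)` and of `∫ T^w f (dr, θ_r + θ̃_r)` both converge as the mesh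
tends to `0`, and their limits coincide. -/
theorem nonlinear_young_change_of_variables
    (T q : ℝ) (hT : 0 < T) (hq1 : 1 ≤ q) (hq2 : q < 2) (d : ℕ) (hd : 1 ≤ d)
    (w : ℝ → EuclideanSpace ℝ (Fin d))
    (hw : ContinuousOn w (Set.Icc 0 T))
    (f : ℝ → EuclideanSpace ℝ (Fin d) → EuclideanSpace ℝ (Fin d))
    (hfb : ∃ M : ℝ, ∀ r x, ‖f r x‖ ≤ M)
    (hfc : Continuous (fun p : ℝ × EuclideanSpace ℝ (Fin d) => f p.1 p.2))
    (θ θ' : ℝ → EuclideanSpace ℝ (Fin d))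
    (hθ : pVar q θ 0 T < ⊤) (hθ' : pVar q θ' 0 T < ⊤)
    (hA : qVarC1 q (fun t x => ∫ r in (0:ℝ)..t, f r (w r + θ r + x)) 0 T < ⊤) :
    ∀ t : ℝ, 0 ≤ t → t ≤ T →
    ∃ I : EuclideanSpace ℝ (Fin d),
      (∀ ε > (0:ℝ), ∃ δ > (0:ℝ), ∀ P : PathPartition 0 t, P.mesh < δ →
        ‖(∑ i : Fin P.n,
            ((∫ r in (0:ℝ)..(P.pts i.succ), f r (w r + θ r + θ' (P.pts i.castSucc))) -
              ∫ r in (0:ℝ)..(P.pts i.castSucc), f r (w r + θ r + θ' (P.pts i.castSucc))))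
          - I‖ < ε) ∧
      (∀ ε > (0:ℝ), ∃ δ > (0:ℝ), ∀ P : PathPartition 0 t, P.mesh < δ →
        ‖(∑ i : Fin P.n,
            ∫ r in (P.pts i.castSucc)..(P.pts i.succ),
              f r (w r + θ (P.pts i.castSucc) + θ' (P.pts i.castSucc)))
          - I‖ < ε) := by
  obtain ⟨M, hM⟩ := hfb
  intro t ht0 htT
  have hθm := aesm_of_pVar q T t hq1 θ hθ ht0 htT
  have hθ'm := aesm_of_pVar q T t hq1 θ' hθ' ht0 htT
  have hwm : MeasureTheory.AEStronglyMeasurable w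
      (MeasureTheory.volume.restrict (Set.Ioc 0 t)) :=
    (hw.mono (fun x hx => ⟨hx.1.le, hx.2.trans htT⟩)).aestronglyMeasurable measurableSet_Ioc
  have hzv : pVar q (fun _ : ℝ => (0 : EuclideanSpace ℝ (Fin d))) 0 T < ⊤ := by
    rw [pVar_zero_fun q 0 T hq1]
    exact ENNReal.zero_lt_top
  refine ⟨∫ r in (0:ℝ)..t, f r (w r + θ r + θ' r), ?_, ?_⟩
  · -- first Riemann sums
    intro ε hε
    obtain ⟨δ, hδpos, hconv⟩ := gen_conv T q hq1 t ht0 htT f M hM hfc w hw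
      θ θ' (fun _ => 0) hθm hθ'm MeasureTheory.aestronglyMeasurable_const
      (‖θ 0‖ + (pVar q θ 0 T).toReal) (‖θ' 0‖ + (pVar q θ' 0 T).toReal) 0
      (fun s hs => norm_le_of_pVar q T hq1 θ hθ s hs)
      (fun s hs => norm_le_of_pVar q T hq1 θ' hθ' s hs)
      (fun s _ => by simp)
      hθ' hzv ε hε
    refine ⟨δ, hδpos, ?_⟩
    intro P hP
    have h := hconv P hP
    simp only [add_zero] at h
    have hrw : ∀ i : Fin P.n,
        (∫ r in (0:ℝ)..(P.pts i.succ), f r (w r + θ r + θ' (P.pts i.castSucc)))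
          - ∫ r in (0:ℝ)..(P.pts i.castSucc), f r (w r + θ r + θ' (P.pts i.castSucc))
        = ∫ r in (P.pts i.castSucc)..(P.pts i.succ),
            f r (w r + θ r + θ' (P.pts i.castSucc)) := by
      intro i
      have hX : MeasureTheory.AEStronglyMeasurable
          (fun r => w r + θ r + θ' (P.pts i.castSucc))
          (MeasureTheory.volume.restrict (Set.Ioc 0 t)) :=
        (hwm.add hθm).add MeasureTheory.aestronglyMeasurable_const
      apply intervalIntegral.integral_interval_sub_left
      · exact intervalIntegrable_comp t M f hM hfc _ hX 0 (P.pts i.succ)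
          le_rfl (P.pts_mem _).1 (P.pts_mem _).2
      · exact intervalIntegrable_comp t M f hM hfc _ hX 0 (P.pts i.castSucc)
          le_rfl (P.pts_mem _).1 (P.pts_mem _).2
    rw [Finset.sum_congr rfl (fun i _ => hrw i)]
    exact h
  · -- second Riemann sums
    intro ε hε
    obtain ⟨δ, hδpos, hconv⟩ := gen_conv T q hq1 t ht0 htT f M hM hfc w hw
      (fun _ => 0) θ θ' MeasureTheory.aestronglyMeasurable_const hθm hθ'm
      0 (‖θ 0‖ + (pVar q θ 0 T).toReal) (‖θ' 0‖ + (pVar q θ' 0 T).toReal)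
      (fun s _ => by simp)
      (fun s hs => norm_le_of_pVar q T hq1 θ hθ s hs)
      (fun s hs => norm_le_of_pVar q T hq1 θ' hθ' s hs)
      hθ hθ' ε hε
    refine ⟨δ, hδpos, ?_⟩
    intro P hP
    have h := hconv P hP
    simp only [add_zero, zero_add, ← add_assoc] at h
    exact h
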